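/- (Rank balancing) Let A(x) = Σ_{i=0}^d x^i A_i be a matrix polynomial over an infinite field with det A(x) not identically zero as a polynomial in x. Then there exist scalars t₁, t₂, t₃, t₄ with t₁t₄ − t₂t₃ ≠ 0 such that the matrix polynomial B(y) := (t₃y + t₄)^d · A((t₁y + t₂)/(t₃y + t₄)) has invertible leading coefficient, i.e., the coefficient of y^d in B(y), which equals Σ_{i=0}^d t₁^i t₃^{d−i} A_i, is invertible. -/

import Mathlib

open Polynomial

/-! Substituting `x = (t y - 1) / y` (so `t₁ = t, t₂ = -1, t₃ = 1, t₄ = 0`, of determinant `1`)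
makes the leading coefficient of `B` equal to `A(t)`. Since `det A(x)` is a nonzero polynomial
over an infinite field, some `t` is not one of its roots, and then `det A(t) ≠ 0`. -/

theorem Matrix.map_eval_of_sum_C_mul_X_pow {R ι m n : Type*} [CommRing R] [Fintype ι]
    (A : ι → Matrix m n R) (e : ι → ℕ) (t : R) :
    (Matrix.of fun a b => ∑ i, C (A i a b) * X ^ e i).map (eval t) = ∑ i, t ^ e i • A i := by
  ext a b
  simp only [Matrix.map_apply, Matrix.of_apply, eval_finsetSum, eval_mul, eval_C, eval_pow, eval_X,
    Matrix.sum_apply, Matrix.smul_apply, smul_eq_mul]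
  exact Finset.sum_congr rfl fun i _ => mul_comm _ _

theorem Polynomial.exists_eval_ne_zero_of_infinite {R : Type*} [CommRing R] [IsDomain R]
    [Infinite R] {p : R[X]} (hp : p ≠ 0) : ∃ t, p.eval t ≠ 0 := by
  by_contra! hall
  exact hp (zero_of_eval_zero p hall)

/-- Rank balancing: if `det A(x)` is not identically zero for a matrix polynomial
`A(x) = Σᵢ xⁱ Aᵢ` over an infinite field, then there are scalars `t₁,t₂,t₃,t₄` with
`t₁t₄ − t₂t₃ ≠ 0` such that the leading coefficient `Σᵢ t₁ⁱ t₃^{d−i} Aᵢ` of the transformed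
matrix polynomial `B(y) = (t₃y+t₄)^d A((t₁y+t₂)/(t₃y+t₄))` is invertible. -/
theorem rank_balancing {K : Type*} [Field K] [Infinite K] (d r : ℕ)
    (A : Fin (d + 1) → Matrix (Fin r) (Fin r) K)
    (h : (Matrix.of fun a b : Fin r =>
        ∑ i : Fin (d + 1), Polynomial.C (A i a b) * Polynomial.X ^ (i : ℕ)).det ≠ 0) :
    ∃ t₁ t₂ t₃ t₄ : K, t₁ * t₄ - t₂ * t₃ ≠ 0 ∧
      IsUnit (∑ i : Fin (d + 1), (t₁ ^ (i : ℕ) * t₃ ^ (d - (i : ℕ))) • A i).det := by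
  obtain ⟨t, ht⟩ := exists_eval_ne_zero_of_infinite h
  refine ⟨t, -1, 1, 0, by simp, ?_⟩
  have hlead : ∑ i : Fin (d + 1), (t ^ (i : ℕ) * 1 ^ (d - (i : ℕ))) • A i =
      (evalRingHom t).mapMatrix
        (Matrix.of fun a b => ∑ i : Fin (d + 1), C (A i a b) * X ^ (i : ℕ)) := by
    simpa using (Matrix.map_eval_of_sum_C_mul_X_pow A (fun i => (i : ℕ)) t).symm
  rw [hlead, ← RingHom.map_det, isUnit_iff_ne_zero]
  exact ht
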